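/- One-step correctness of the simplification rules: if C ⇝_σ C' is a simplification step on deducibility constraint systems, then for every solution τ of C', the composed substitution στ is a solution of C. -/
import Mathlib


open scoped Classical

/-- Terms built from names, variables, pairing, symmetric/asymmetric encryption,
signatures and private keys. -/
inductive Tm where
  | var : ℕ → Tm
  | name : ℕ → Tm
  | pair : Tm → Tm → Tm
  | enc : Tm → Tm → Tm
  | enca : Tm → Tm → Tm
  | sign : Tm → Tm → Tm
  | priv : Tm → Tm
deriving DecidableEq

namespace Tm

/-- The variables of a term. -/
def vars : Tm → Finset ℕ
  | var x => {x}
  | name _ => ∅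
  | pair s t => s.vars ∪ t.vars
  | enc s t => s.vars ∪ t.vars
  | enca s t => s.vars ∪ t.vars
  | sign s t => s.vars ∪ t.vars
  | priv t => t.vars

/-- The subterms of a term. -/
def subterms : Tm → Finset Tm
  | var x => {var x}
  | name a => {name a}
  | pair s t => insert (pair s t) (s.subterms ∪ t.subterms)
  | enc s t => insert (enc s t) (s.subterms ∪ t.subterms)
  | enca s t => insert (enca s t) (s.subterms ∪ t.subterms)
  | sign s t => insert (sign s t) (s.subterms ∪ t.subterms)
  | priv t => insert (priv t) t.subterms

/-- A term is a variable. -/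
def IsVar : Tm → Prop
  | var _ => True
  | _ => False

end Tm

/-- The Dolev-Yao deduction relation `T ⊢ u`. -/
inductive Deduce : Finset Tm → Tm → Prop where
  | ax {T u} : u ∈ T → Deduce T u
  | pairI {T x y} : Deduce T x → Deduce T y → Deduce T (Tm.pair x y)
  | encI {T x y} : Deduce T x → Deduce T y → Deduce T (Tm.enc x y)
  | encaI {T x y} : Deduce T x → Deduce T y → Deduce T (Tm.enca x y)
  | signI {T x y} : Deduce T x → Deduce T y → Deduce T (Tm.sign x y)
  | encE {T x y} : Deduce T (Tm.enc x y) → Deduce T y → Deduce T x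
  | encaE {T x y} : Deduce T (Tm.enca x y) → Deduce T (Tm.priv y) → Deduce T x
  | fstE {T x y} : Deduce T (Tm.pair x y) → Deduce T x
  | sndE {T x y} : Deduce T (Tm.pair x y) → Deduce T y

/-- Substitutions. -/
def Subst := ℕ → Tm

/-- Applying a substitution to a term. -/
def Tm.subst (σ : Subst) : Tm → Tm
  | .var x => σ x
  | .name a => .name a
  | .pair s t => .pair (s.subst σ) (t.subst σ)
  | .enc s t => .enc (s.subst σ) (t.subst σ)
  | .enca s t => .enca (s.subst σ) (t.subst σ)
  | .sign s t => .sign (s.subst σ) (t.subst σ)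
  | .priv t => .priv (t.subst σ)

/-- The identity substitution. -/
def idSubst : Subst := Tm.var

/-- Composition of substitutions: `σ.comp τ` applies `σ` first, then `τ`. -/
def Subst.comp (σ τ : Subst) : Subst := fun x => (σ x).subst τ

/-- The variables of a finite set of terms. -/
def setVars (T : Finset Tm) : Finset ℕ := T.sup Tm.vars

/-- The subterms of a finite set of terms. -/
def stSet (T : Finset Tm) : Finset Tm := T.sup Tm.subterms

/-- A deducibility constraint `T ⊩ u`: a (nonempty) finite set of terms and a term. -/
abbrev Cst := Finset Tm × Tm

/-- Applying a substitution to a constraint. -/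
def conSubst (σ : Subst) (c : Cst) : Cst := (c.1.image (Tm.subst σ), c.2.subst σ)

/-- Applying a substitution to a constraint system. -/
def csSubst (σ : Subst) (S : Finset Cst) : Finset Cst := S.image (conSubst σ)

/-- The variables of a constraint system. -/
def sysVars (C : Finset Cst) : Finset ℕ := C.sup (fun c => setVars c.1 ∪ c.2.vars)

/-- The set `{x | (T' ⊩ x) ∈ S, T' ⊊ T}` of variables (as terms) occurring as
right-hand sides of constraints of `S` whose left-hand side is strictly contained in `T`. -/
noncomputable def extraVars (S : Finset Cst) (T : Finset Tm) : Finset Tm :=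
  (S.filter (fun c => c.1 ⊂ T ∧ c.2.IsVar)).image Prod.snd

/-- `C` is a deducibility constraint system: left-hand sides are nonempty,
totally ordered by inclusion, and every variable of a left-hand side `T` occurs in
the right-hand side of a constraint whose left-hand side is minimal among those whose
right-hand side contains the variable, and strictly included in `T`. -/
def IsCS (C : Finset Cst) : Prop :=
  (∀ c ∈ C, c.1.Nonempty) ∧
  (∀ c ∈ C, ∀ c' ∈ C, c.1 ⊆ c'.1 ∨ c'.1 ⊆ c.1) ∧
  (∀ c ∈ C, ∀ x ∈ setVars c.1,
    ∃ c' ∈ C, x ∈ c'.2.vars ∧ c'.1 ⊂ c.1 ∧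
      ∀ c'' ∈ C, x ∈ c''.2.vars → c'.1 ⊆ c''.1)

/-- A solution of a constraint system: a ground substitution whose domain is `V(C)`
such that `Tθ ⊢ uθ` for every constraint `(T ⊩ u) ∈ C`. -/
def IsSolution (θ : Subst) (C : Finset Cst) : Prop :=
  (∀ x ∈ sysVars C, (θ x).vars = ∅) ∧
  (∀ x, x ∉ sysVars C → θ x = Tm.var x) ∧
  (∀ c ∈ C, Deduce (c.1.image (Tm.subst θ)) (c.2.subst θ))

/-- A (non-`⊥`) constraint system is solved if all right-hand sides are variables. -/
def Solved (C : Finset Cst) : Prop := ∀ c ∈ C, c.2.IsVar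

/-- `σ` is a most general unifier of `t` and `u`. -/
def IsMGU (σ : Subst) (t u : Tm) : Prop :=
  t.subst σ = u.subst σ ∧
  (∀ x, x ∉ t.vars ∪ u.vars → σ x = Tm.var x) ∧
  (∀ x, (σ x).vars ⊆ t.vars ∪ u.vars) ∧
  (∀ δ : Subst, t.subst δ = u.subst δ → ∃ ρ : Subst, ∀ x, δ x = (σ x).subst ρ)

/-- The binary constructors `pair`, `enc`, `enca`, `sign`. -/
inductive BinOp where
  | pair | enc | enca | sign

def BinOp.app : BinOp → Tm → Tm → Tm
  | .pair => Tm.pair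
  | .enc => Tm.enc
  | .enca => Tm.enca
  | .sign => Tm.sign

/-- One step of simplification `C ⇝_σ C'` (result `none` represents `⊥`),
given by the rules R1, R2, R3, R3', R4, Rf. -/
inductive Step : Finset Cst → Subst → Option (Finset Cst) → Prop where
  | r1 {S : Finset Cst} {T : Finset Tm} {u : Tm} :
      (T, u) ∈ S →
      Deduce (T ∪ extraVars (S.erase (T, u)) T) u →
      Step S idSubst (some (S.erase (T, u)))
  | r2 {S : Finset Cst} {T : Finset Tm} {u t : Tm} {σ : Subst} :
      (T, u) ∈ S → t ∈ stSet T → ¬ t.IsVar → ¬ u.IsVar → t ≠ u →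
      IsMGU σ t u →
      Step S σ (some (csSubst σ S))
  | r3 {S : Finset Cst} {T : Finset Tm} {u t₁ t₂ : Tm} {σ : Subst} :
      (T, u) ∈ S → t₁ ∈ stSet T → t₂ ∈ stSet T → ¬ t₁.IsVar → ¬ t₂.IsVar →
      t₁ ≠ t₂ → IsMGU σ t₁ t₂ →
      Step S σ (some (csSubst σ S))
  | r3' {S : Finset Cst} {T : Finset Tm} {u t₁ t₂ t₃ : Tm} {σ : Subst} :
      (T, u) ∈ S → Tm.enca t₁ t₂ ∈ stSet T → Tm.priv t₃ ∈ stSet T →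
      t₂ ≠ t₃ → (t₂.IsVar ∨ t₃.IsVar) → IsMGU σ t₂ t₃ →
      Step S σ (some (csSubst σ S))
  | r4 {S : Finset Cst} {T : Finset Tm} {u : Tm} :
      (T, u) ∈ S → setVars T ∪ u.vars = ∅ → ¬ Deduce T u →
      Step S idSubst none
  | rf {S : Finset Cst} {T : Finset Tm} {u v : Tm} (b : BinOp) :
      (T, b.app u v) ∈ S →
      Step S idSubst (some (insert (T, u) (insert (T, v) (S.erase (T, b.app u v)))))

/-- Sequences of simplification steps `C ⇝*_σ C'`, composing the substitutions. -/
inductive Steps : Finset Cst → Subst → Option (Finset Cst) → Prop where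
  | refl (S) : Steps S idSubst (some S)
  | tail {S : Finset Cst} {σ : Subst} {S' : Finset Cst} {τ : Subst} {R} :
      Steps S σ (some S') → Step S' τ R → Steps S (σ.comp τ) R

/-- A security property, identified with its set of solutions (ground substitutions
making it true); `θ` solves `φσ` iff `σθ` solves `φ`. -/
def SecProp := Subst → Prop

/-- The instance `φσ` of a security property `φ` by a substitution `σ`. -/
def SecProp.subst (φ : SecProp) (σ : Subst) : SecProp := fun θ => φ (σ.comp θ)

/-- `θ` is an attack for `φ` and `C` if it is a solution of both. -/
def IsAttack (θ : Subst) (C : Finset Cst) (φ : SecProp) : Prop :=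
  IsSolution θ C ∧ φ θ

/-- One memorizing simplification step: `C;D ⇒_σ (C' \ D); (D ∪ (C \ C'))`. -/
inductive MStep : Finset Cst × Finset Cst → Subst → Finset Cst × Finset Cst → Prop where
  | mk {C D C' : Finset Cst} {σ : Subst} :
      Step C σ (some C') → MStep (C, D) σ (C' \ D, D ∪ (C \ C'))

/-- Sequences of memorizing simplification steps, composing the substitutions. -/
inductive MSteps : Finset Cst × Finset Cst → Subst → Finset Cst × Finset Cst → Prop where
  | refl (P) : MSteps P idSubst P
  | tail {P : Finset Cst × Finset Cst} {σ : Subst} {Q : Finset Cst × Finset Cst}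
      {τ : Subst} {R : Finset Cst × Finset Cst} :
      MSteps P σ Q → MStep Q τ R → MSteps P (σ.comp τ) R

section Aux

lemma Tm.subst_subst (σ τ : Subst) (t : Tm) :
    (t.subst σ).subst τ = t.subst (σ.comp τ) := by
  induction t <;> simp [Tm.subst, Subst.comp, *]

lemma Subst.id_comp (τ : Subst) : Subst.comp idSubst τ = τ := rfl

lemma Deduce.mono {T T' : Finset Tm} {u : Tm} (h : Deduce T u) (hs : T ⊆ T') :
    Deduce T' u := by
  induction h with
  | ax h => exact .ax (hs h)
  | pairI _ _ ih1 ih2 => exact .pairI ih1 ih2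
  | encI _ _ ih1 ih2 => exact .encI ih1 ih2
  | encaI _ _ ih1 ih2 => exact .encaI ih1 ih2
  | signI _ _ ih1 ih2 => exact .signI ih1 ih2
  | encE _ _ ih1 ih2 => exact .encE ih1 ih2
  | encaE _ _ ih1 ih2 => exact .encaE ih1 ih2
  | fstE _ ih => exact .fstE ih
  | sndE _ ih => exact .sndE ih

lemma Deduce.substs {T : Finset Tm} {u : Tm} (θ : Subst) (h : Deduce T u) :
    Deduce (T.image (Tm.subst θ)) (u.subst θ) := by
  induction h with
  | ax h => exact .ax (Finset.mem_image_of_mem _ h)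
  | pairI _ _ ih1 ih2 => exact .pairI ih1 ih2
  | encI _ _ ih1 ih2 => exact .encI ih1 ih2
  | encaI _ _ ih1 ih2 => exact .encaI ih1 ih2
  | signI _ _ ih1 ih2 => exact .signI ih1 ih2
  | encE _ _ ih1 ih2 => exact .encE ih1 ih2
  | encaE _ _ ih1 ih2 => exact .encaE ih1 ih2
  | fstE _ ih => exact .fstE ih
  | sndE _ ih => exact .sndE ih

lemma Deduce.cut {S T : Finset Tm} {u : Tm} (h : Deduce S u)
    (hs : ∀ s ∈ S, Deduce T s) : Deduce T u := by
  induction h with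
  | ax h => exact hs _ h
  | pairI _ _ ih1 ih2 => exact .pairI ih1 ih2
  | encI _ _ ih1 ih2 => exact .encI ih1 ih2
  | encaI _ _ ih1 ih2 => exact .encaI ih1 ih2
  | signI _ _ ih1 ih2 => exact .signI ih1 ih2
  | encE _ _ ih1 ih2 => exact .encE ih1 ih2
  | encaE _ _ ih1 ih2 => exact .encaE ih1 ih2
  | fstE _ ih => exact .fstE ih
  | sndE _ ih => exact .sndE ih

lemma mem_setVars {x : ℕ} {T : Finset Tm} :
    x ∈ setVars T ↔ ∃ t ∈ T, x ∈ t.vars := Finset.mem_sup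

lemma mem_stSet {t : Tm} {T : Finset Tm} :
    t ∈ stSet T ↔ ∃ s ∈ T, t ∈ s.subterms := Finset.mem_sup

lemma mem_sysVars {x : ℕ} {C : Finset Cst} :
    x ∈ sysVars C ↔ ∃ c ∈ C, x ∈ setVars c.1 ∪ c.2.vars := Finset.mem_sup

lemma Deduce.vars_subset {T : Finset Tm} {u : Tm} (h : Deduce T u) :
    u.vars ⊆ setVars T := by
  induction h with
  | ax h => exact fun a ha => mem_setVars.mpr ⟨_, h, ha⟩
  | pairI _ _ ih1 ih2 => simpa [Tm.vars] using Finset.union_subset ih1 ih2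
  | encI _ _ ih1 ih2 => simpa [Tm.vars] using Finset.union_subset ih1 ih2
  | encaI _ _ ih1 ih2 => simpa [Tm.vars] using Finset.union_subset ih1 ih2
  | signI _ _ ih1 ih2 => simpa [Tm.vars] using Finset.union_subset ih1 ih2
  | encE _ _ ih1 _ => exact fun a ha => ih1 (by simp [Tm.vars, ha])
  | encaE _ _ ih1 _ => exact fun a ha => ih1 (by simp [Tm.vars, ha])
  | fstE _ ih => exact fun a ha => ih (by simp [Tm.vars, ha])
  | sndE _ ih => exact fun a ha => ih (by simp [Tm.vars, ha])

lemma Tm.vars_subset_of_mem_subterms {t s : Tm} (h : t ∈ s.subterms) :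
    t.vars ⊆ s.vars := by
  induction s with
  | var y => simp [Tm.subterms] at h; subst h; exact subset_rfl
  | name a => simp [Tm.subterms] at h; subst h; exact subset_rfl
  | pair s₁ s₂ ih1 ih2 =>
    simp [Tm.subterms] at h
    rcases h with h | h | h
    · subst h; exact subset_rfl
    · exact (ih1 h).trans (by simp [Tm.vars])
    · exact (ih2 h).trans (by simp [Tm.vars])
  | enc s₁ s₂ ih1 ih2 =>
    simp [Tm.subterms] at h
    rcases h with h | h | h
    · subst h; exact subset_rfl
    · exact (ih1 h).trans (by simp [Tm.vars])
    · exact (ih2 h).trans (by simp [Tm.vars])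
  | enca s₁ s₂ ih1 ih2 =>
    simp [Tm.subterms] at h
    rcases h with h | h | h
    · subst h; exact subset_rfl
    · exact (ih1 h).trans (by simp [Tm.vars])
    · exact (ih2 h).trans (by simp [Tm.vars])
  | sign s₁ s₂ ih1 ih2 =>
    simp [Tm.subterms] at h
    rcases h with h | h | h
    · subst h; exact subset_rfl
    · exact (ih1 h).trans (by simp [Tm.vars])
    · exact (ih2 h).trans (by simp [Tm.vars])
  | priv s ih =>
    simp [Tm.subterms] at h
    rcases h with h | h
    · subst h; exact subset_rfl
    · exact ih h

lemma vars_stSet {t : Tm} {T : Finset Tm} (h : t ∈ stSet T) :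
    t.vars ⊆ setVars T := by
  obtain ⟨s, hs, hts⟩ := mem_stSet.mp h
  exact fun a ha => mem_setVars.mpr ⟨s, hs, Tm.vars_subset_of_mem_subterms hts ha⟩

lemma Tm.mem_vars_subst {σ : Subst} {t : Tm} {x : ℕ} :
    x ∈ (t.subst σ).vars ↔ ∃ y ∈ t.vars, x ∈ (σ y).vars := by
  induction t with
  | var y => simp [Tm.subst, Tm.vars]
  | name a => simp [Tm.subst, Tm.vars]
  | pair s₁ s₂ ih1 ih2 =>
    simp only [Tm.subst, Tm.vars, Finset.mem_union, ih1, ih2]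
    aesop
  | enc s₁ s₂ ih1 ih2 =>
    simp only [Tm.subst, Tm.vars, Finset.mem_union, ih1, ih2]
    aesop
  | enca s₁ s₂ ih1 ih2 =>
    simp only [Tm.subst, Tm.vars, Finset.mem_union, ih1, ih2]
    aesop
  | sign s₁ s₂ ih1 ih2 =>
    simp only [Tm.subst, Tm.vars, Finset.mem_union, ih1, ih2]
    aesop
  | priv s ih => simpa [Tm.subst, Tm.vars] using ih

lemma mem_sysVars_csSubst {σ : Subst} {C : Finset Cst} {x : ℕ} :
    x ∈ sysVars (csSubst σ C) ↔ ∃ y ∈ sysVars C, x ∈ (σ y).vars := by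
  constructor
  · intro hx
    obtain ⟨c', hc', hx⟩ := mem_sysVars.mp hx
    obtain ⟨c, hc, rfl⟩ := Finset.mem_image.mp hc'
    rcases Finset.mem_union.mp hx with hx | hx
    · obtain ⟨t', ht', hxt⟩ := mem_setVars.mp hx
      obtain ⟨t, ht, rfl⟩ := Finset.mem_image.mp ht'
      obtain ⟨y, hy, hxy⟩ := Tm.mem_vars_subst.mp hxt
      exact ⟨y, mem_sysVars.mpr ⟨c, hc, Finset.mem_union_left _
        (mem_setVars.mpr ⟨t, ht, hy⟩)⟩, hxy⟩
    · obtain ⟨y, hy, hxy⟩ := Tm.mem_vars_subst.mp hx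
      exact ⟨y, mem_sysVars.mpr ⟨c, hc, Finset.mem_union_right _ hy⟩, hxy⟩
  · rintro ⟨y, hy, hxy⟩
    obtain ⟨c, hc, hy⟩ := mem_sysVars.mp hy
    refine mem_sysVars.mpr ⟨conSubst σ c, Finset.mem_image_of_mem _ hc, ?_⟩
    rcases Finset.mem_union.mp hy with hy | hy
    · obtain ⟨t, ht, hyt⟩ := mem_setVars.mp hy
      exact Finset.mem_union_left _ (mem_setVars.mpr
        ⟨t.subst σ, Finset.mem_image_of_mem _ ht, Tm.mem_vars_subst.mpr ⟨y, hyt, hxy⟩⟩)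
    · exact Finset.mem_union_right _ (Tm.mem_vars_subst.mpr ⟨y, hy, hxy⟩)

lemma cst_vars_subset {C : Finset Cst} {T : Finset Tm} {u : Tm}
    (h : (T, u) ∈ C) : setVars T ∪ u.vars ⊆ sysVars C :=
  fun a ha => mem_sysVars.mpr ⟨(T, u), h, ha⟩

/-- Correctness for the unification rules R2, R3, R3'. -/
lemma mgu_correct {C : Finset Cst} {σ τ : Subst} {t u : Tm}
    (hvars : t.vars ∪ u.vars ⊆ sysVars C) (hmgu : IsMGU σ t u)
    (hτ : IsSolution τ (csSubst σ C)) : IsSolution (σ.comp τ) C := by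
  obtain ⟨_, hid, hsub, _⟩ := hmgu
  refine ⟨?_, ?_, ?_⟩
  · intro x hx
    rw [Finset.eq_empty_iff_forall_notMem]
    intro z hz
    rw [show Subst.comp σ τ x = (σ x).subst τ from rfl] at hz
    obtain ⟨y, hy, hzy⟩ := Tm.mem_vars_subst.mp hz
    have hy' : y ∈ sysVars (csSubst σ C) := mem_sysVars_csSubst.mpr ⟨x, hx, hy⟩
    rw [hτ.1 y hy'] at hzy
    simp at hzy
  · intro x hx
    have hσx : σ x = Tm.var x := hid x (fun hxx => hx (hvars hxx))
    have : x ∉ sysVars (csSubst σ C) := by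
      intro hx'
      obtain ⟨y, hy, hxy⟩ := mem_sysVars_csSubst.mp hx'
      exact hx (hvars (hsub y hxy)) |>.elim
    have := hτ.2.1 x this
    show (σ x).subst τ = Tm.var x
    rw [hσx]
    exact this
  · intro c hc
    have := hτ.2.2 (conSubst σ c) (Finset.mem_image_of_mem _ hc)
    simpa only [conSubst, Finset.image_image, Function.comp_def,
      Tm.subst_subst] using this

lemma BinOp.vars_app (b : BinOp) (u v : Tm) :
    (b.app u v).vars = u.vars ∪ v.vars := by
  cases b <;> rfl

lemma BinOp.subst_app (b : BinOp) (θ : Subst) (u v : Tm) :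
    (b.app u v).subst θ = b.app (u.subst θ) (v.subst θ) := by
  cases b <;> rfl

end Aux

/-- one-step correctness of the simplification rules: if `C ⇝_σ C'`
and `τ` is a solution of `C'`, then `στ` is a solution of `C`. -/
theorem step_correct (C C' : Finset Cst) (σ : Subst) (hC : IsCS C)
    (h : Step C σ (some C')) (τ : Subst) (hτ : IsSolution τ C') :
    IsSolution (σ.comp τ) C := by
  cases h with
  | @r1 T u hmem hded =>
    rw [Subst.id_comp]
    obtain ⟨hg, hid, hded'⟩ := hτ
    have hsub' : sysVars (C.erase (T, u)) ⊆ sysVars C := by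
      intro x hx
      obtain ⟨c, hc, hxc⟩ := mem_sysVars.mp hx
      exact mem_sysVars.mpr ⟨c, Finset.mem_of_mem_erase hc, hxc⟩
    have hTvar : ∀ x ∈ setVars T, x ∈ sysVars (C.erase (T, u)) := by
      intro x hx
      obtain ⟨c', hc', hxv, hss, -⟩ := hC.2.2 (T, u) hmem x hx
      have hne : c' ≠ (T, u) := by
        intro heq
        rw [heq] at hss
        exact (lt_irrefl _ hss)
      exact mem_sysVars.mpr ⟨c', Finset.mem_erase.mpr ⟨hne, hc'⟩,
        Finset.mem_union_right _ hxv⟩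
    have hCC' : sysVars C ⊆ sysVars (C.erase (T, u)) := by
      intro x hx
      obtain ⟨c, hc, hxc⟩ := mem_sysVars.mp hx
      by_cases hceq : c = (T, u)
      · subst hceq
        rcases Finset.mem_union.mp hxc with hx1 | hx2
        · exact hTvar x hx1
        · have := Deduce.vars_subset hded hx2
          rw [show setVars (T ∪ extraVars (C.erase (T, u)) T)
              = setVars T ∪ setVars (extraVars (C.erase (T, u)) T)
            from Finset.sup_union] at this
          rcases Finset.mem_union.mp this with h1 | h2
          · exact hTvar x h1
          · obtain ⟨e, he, hxe⟩ := mem_setVars.mp h2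
            obtain ⟨c', hc', rfl⟩ := Finset.mem_image.mp he
            exact mem_sysVars.mpr ⟨c', (Finset.mem_filter.mp hc').1,
              Finset.mem_union_right _ hxe⟩
      · exact mem_sysVars.mpr ⟨c, Finset.mem_erase.mpr ⟨hceq, hc⟩, hxc⟩
    refine ⟨fun x hx => hg x (hCC' hx), fun x hx => hid x (fun h => hx (hsub' h)), ?_⟩
    intro c hc
    by_cases hceq : c = (T, u)
    · subst hceq
      have h2 := Deduce.substs τ hded
      refine h2.cut ?_
      intro s hs
      obtain ⟨t, ht, rfl⟩ := Finset.mem_image.mp hs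
      rcases Finset.mem_union.mp ht with ht | ht
      · exact .ax (Finset.mem_image_of_mem _ ht)
      · obtain ⟨c', hc', rfl⟩ := Finset.mem_image.mp ht
        have hc'' := Finset.mem_filter.mp hc'
        exact (hded' c' hc''.1).mono
          (Finset.image_subset_image hc''.2.1.subset)
    · exact hded' c (Finset.mem_erase.mpr ⟨hceq, hc⟩)
  | @r2 T u t _ hmem ht _ _ _ hmgu =>
    have h1 := cst_vars_subset hmem
    have hT : setVars T ⊆ sysVars C := (Finset.union_subset_iff.mp h1).1
    have hu : u.vars ⊆ sysVars C := (Finset.union_subset_iff.mp h1).2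
    exact mgu_correct
      (Finset.union_subset ((vars_stSet ht).trans hT) hu) hmgu hτ
  | @r3 T u t₁ t₂ _ hmem ht1 ht2 _ _ _ hmgu =>
    have hT : setVars T ⊆ sysVars C :=
      (Finset.union_subset_iff.mp (cst_vars_subset hmem)).1
    exact mgu_correct
      (Finset.union_subset ((vars_stSet ht1).trans hT)
        ((vars_stSet ht2).trans hT)) hmgu hτ
  | @r3' T u t₁ t₂ t₃ _ hmem henca hpriv _ _ hmgu =>
    have hT : setVars T ⊆ sysVars C :=
      (Finset.union_subset_iff.mp (cst_vars_subset hmem)).1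
    have h2 : t₂.vars ⊆ sysVars C :=
      fun a ha => hT (vars_stSet henca (by simp [Tm.vars, ha]))
    have h3 : t₃.vars ⊆ sysVars C :=
      fun a ha => hT (vars_stSet hpriv (by simp [Tm.vars, ha]))
    exact mgu_correct (Finset.union_subset h2 h3) hmgu hτ
  | @rf T u v b hmem =>
    rw [Subst.id_comp]
    obtain ⟨hg, hid, hded'⟩ := hτ
    have hvu : (T, u) ∈ insert (T, u) (insert (T, v) (C.erase (T, b.app u v))) :=
      Finset.mem_insert_self _ _
    have hvv : (T, v) ∈ insert (T, u) (insert (T, v) (C.erase (T, b.app u v))) :=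
      Finset.mem_insert_of_mem (Finset.mem_insert_self _ _)
    have hsub1 : sysVars (insert (T, u) (insert (T, v) (C.erase (T, b.app u v))))
        ⊆ sysVars C := by
      intro x hx
      obtain ⟨c, hc, hxc⟩ := mem_sysVars.mp hx
      rcases Finset.mem_insert.mp hc with rfl | hc
      · refine mem_sysVars.mpr ⟨(T, b.app u v), hmem, ?_⟩
        rcases Finset.mem_union.mp hxc with h1 | h1
        · exact Finset.mem_union_left _ h1
        · exact Finset.mem_union_right _ (by
            rw [BinOp.vars_app]; exact Finset.mem_union_left _ h1)
      rcases Finset.mem_insert.mp hc with rfl | hc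
      · refine mem_sysVars.mpr ⟨(T, b.app u v), hmem, ?_⟩
        rcases Finset.mem_union.mp hxc with h1 | h1
        · exact Finset.mem_union_left _ h1
        · exact Finset.mem_union_right _ (by
            rw [BinOp.vars_app]; exact Finset.mem_union_right _ h1)
      · exact mem_sysVars.mpr ⟨c, Finset.mem_of_mem_erase hc, hxc⟩
    have hsub2 : sysVars C ⊆
        sysVars (insert (T, u) (insert (T, v) (C.erase (T, b.app u v)))) := by
      intro x hx
      obtain ⟨c, hc, hxc⟩ := mem_sysVars.mp hx
      by_cases hceq : c = (T, b.app u v)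
      · subst hceq
        rcases Finset.mem_union.mp hxc with h1 | h1
        · exact mem_sysVars.mpr ⟨(T, u), hvu, Finset.mem_union_left _ h1⟩
        · rw [BinOp.vars_app] at h1
          rcases Finset.mem_union.mp h1 with h2 | h2
          · exact mem_sysVars.mpr ⟨(T, u), hvu, Finset.mem_union_right _ h2⟩
          · exact mem_sysVars.mpr ⟨(T, v), hvv, Finset.mem_union_right _ h2⟩
      · exact mem_sysVars.mpr ⟨c, Finset.mem_insert_of_mem
          (Finset.mem_insert_of_mem (Finset.mem_erase.mpr ⟨hceq, hc⟩)), hxc⟩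
    refine ⟨fun x hx => hg x (hsub2 hx), fun x hx => hid x (fun h => hx (hsub1 h)), ?_⟩
    intro c hc
    by_cases hceq : c = (T, b.app u v)
    · subst hceq
      show Deduce (T.image (Tm.subst τ)) ((b.app u v).subst τ)
      rw [BinOp.subst_app]
      have d1 := hded' (T, u) hvu
      have d2 := hded' (T, v) hvv
      cases b
      exacts [.pairI d1 d2, .encI d1 d2, .encaI d1 d2, .signI d1 d2]
    · exact hded' c (Finset.mem_insert_of_mem
        (Finset.mem_insert_of_mem (Finset.mem_erase.mpr ⟨hceq, hc⟩)))
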